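/- Subject reduction up to conversion: if Γ ⊢ t : A and t ⇝* u, then t and u are convertible at type A in context Γ, i.e. Γ ⊢ t ≡ u : A. -/
import Mathlib


namespace STLCp

/-- Types of the simply-typed λ-calculus with sums, over base types `B`. -/
inductive Ty (B : Type) : Type
  | base : B → Ty B
  | unit : Ty B
  | empty : Ty B
  | prod : Ty B → Ty B → Ty B
  | sum : Ty B → Ty B → Ty B
  | arr : Ty B → Ty B → Ty B

/-- Terms (de Bruijn style) over a set of constants `C`. -/
inductive Tm (C : Type) : Type
  | cst : C → Tm C
  | var : Nat → Tm C
  | star : Tm C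
  | pair : Tm C → Tm C → Tm C
  | proj1 : Tm C → Tm C
  | proj2 : Tm C → Tm C
  | lam : Tm C → Tm C
  | app : Tm C → Tm C → Tm C
  | inl : Tm C → Tm C
  | inr : Tm C → Tm C
  | raise : Tm C → Tm C
  | case : Tm C → Tm C → Tm C → Tm C

variable {B C : Type}

/-- Lifting a renaming under a binder. -/
def liftRen (ρ : Nat → Nat) : Nat → Nat
  | 0 => 0
  | n + 1 => ρ n + 1

/-- Action of renamings on terms. -/
def rename (ρ : Nat → Nat) : Tm C → Tm C
  | .cst c => .cst c
  | .var n => .var (ρ n)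
  | .star => .star
  | .pair t u => .pair (rename ρ t) (rename ρ u)
  | .proj1 t => .proj1 (rename ρ t)
  | .proj2 t => .proj2 (rename ρ t)
  | .lam t => .lam (rename (liftRen ρ) t)
  | .app t u => .app (rename ρ t) (rename ρ u)
  | .inl t => .inl (rename ρ t)
  | .inr t => .inr (rename ρ t)
  | .raise t => .raise (rename ρ t)
  | .case s bl br => .case (rename ρ s) (rename (liftRen ρ) bl) (rename (liftRen ρ) br)

/-- Lifting a parallel substitution under a binder. -/
def liftSub (σ : Nat → Tm C) : Nat → Tm C
  | 0 => .var 0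
  | n + 1 => rename Nat.succ (σ n)

/-- Action of parallel substitutions on terms, `t[σ]`. -/
def subst (σ : Nat → Tm C) : Tm C → Tm C
  | .cst c => .cst c
  | .var n => σ n
  | .star => .star
  | .pair t u => .pair (subst σ t) (subst σ u)
  | .proj1 t => .proj1 (subst σ t)
  | .proj2 t => .proj2 (subst σ t)
  | .lam t => .lam (subst (liftSub σ) t)
  | .app t u => .app (subst σ t) (subst σ u)
  | .inl t => .inl (subst σ t)
  | .inr t => .inr (subst σ t)
  | .raise t => .raise (subst σ t)
  | .case s bl br => .case (subst σ s) (subst (liftSub σ) bl) (subst (liftSub σ) br)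

/-- The substitution `u..`: maps the last variable to `u`, the identity elsewhere. -/
def sub0 (u : Tm C) : Nat → Tm C
  | 0 => u
  | n + 1 => .var n

/-- Eliminations: application, projections and case analysis. -/
inductive Elim (C : Type) : Type
  | eapp : Tm C → Elim C
  | eproj1 : Elim C
  | eproj2 : Elim C
  | ecase : Tm C → Tm C → Elim C

/-- Plugging a term into an elimination, `e[t]`. -/
def plug : Elim C → Tm C → Tm C
  | .eapp u, t => .app t u
  | .eproj1, t => .proj1 t
  | .eproj2, t => .proj2 t
  | .ecase bl br, t => .case t bl br

/-- Weakening the contents of an elimination (used when pushing it under a binder). -/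
def weakenElim : Elim C → Elim C
  | .eapp u => .eapp (rename Nat.succ u)
  | .eproj1 => .eproj1
  | .eproj2 => .eproj2
  | .ecase bl br => .ecase (rename (liftRen Nat.succ) bl) (rename (liftRen Nat.succ) br)

/-- The β-rules. -/
inductive BetaBase : Tm C → Tm C → Prop
  | proj1 (t u : Tm C) : BetaBase (.proj1 (.pair t u)) t
  | proj2 (t u : Tm C) : BetaBase (.proj2 (.pair t u)) u
  | app (t u : Tm C) : BetaBase (.app (.lam t) u) (subst (sub0 u) t)
  | case_inl (a bl br : Tm C) : BetaBase (.case (.inl a) bl br) (subst (sub0 a) bl)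
  | case_inr (b bl br : Tm C) : BetaBase (.case (.inr b) bl br) (subst (sub0 b) br)

/-- The commuting-conversion rules. -/
inductive CCBase : Tm C → Tm C → Prop
  | raise (e : Elim C) (t : Tm C) : CCBase (plug e (.raise t)) (.raise t)
  | case (e : Elim C) (s bl br : Tm C) :
      CCBase (plug e (.case s bl br))
        (.case s (plug (weakenElim e) bl) (plug (weakenElim e) br))

/-- Congruence closure of a base relation on terms. -/
inductive Cong (R : Tm C → Tm C → Prop) : Tm C → Tm C → Prop
  | base : R t u → Cong R t u
  | pairL : Cong R t t' → Cong R (.pair t u) (.pair t' u)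
  | pairR : Cong R u u' → Cong R (.pair t u) (.pair t u')
  | proj1 : Cong R t t' → Cong R (.proj1 t) (.proj1 t')
  | proj2 : Cong R t t' → Cong R (.proj2 t) (.proj2 t')
  | lam : Cong R t t' → Cong R (.lam t) (.lam t')
  | appL : Cong R t t' → Cong R (.app t u) (.app t' u)
  | appR : Cong R u u' → Cong R (.app t u) (.app t u')
  | inl : Cong R t t' → Cong R (.inl t) (.inl t')
  | inr : Cong R t t' → Cong R (.inr t) (.inr t')
  | raise : Cong R t t' → Cong R (.raise t) (.raise t')
  | caseS : Cong R s s' → Cong R (.case s bl br) (.case s' bl br)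
  | caseL : Cong R bl bl' → Cong R (.case s bl br) (.case s bl' br)
  | caseR : Cong R br br' → Cong R (.case s bl br) (.case s bl br')

/-- One-step β-reduction. -/
def StepBeta : Tm C → Tm C → Prop := Cong BetaBase

/-- One-step commuting-conversion reduction. -/
def StepCC : Tm C → Tm C → Prop := Cong CCBase

/-- One-step reduction (β-rules together with commuting conversions). -/
def Step : Tm C → Tm C → Prop := Cong (fun t u => BetaBase t u ∨ CCBase t u)

/-- Reflexive-transitive closures. -/
def RedsBeta : Tm C → Tm C → Prop := Relation.ReflTransGen StepBeta
def RedsCC : Tm C → Tm C → Prop := Relation.ReflTransGen StepCC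
def Reds : Tm C → Tm C → Prop := Relation.ReflTransGen Step

/-- Typing judgment `Γ ⊢ t : A` over a language given by `tyof : C → Ty B`.
Contexts are lists of types, the head being the last-bound variable. -/
inductive HasType (tyof : C → Ty B) : List (Ty B) → Tm C → Ty B → Prop
  | cst (Γ) (c : C) : HasType tyof Γ (.cst c) (tyof c)
  | var : Γ[n]? = some A → HasType tyof Γ (.var n) A
  | star : HasType tyof Γ .star .unit
  | pair : HasType tyof Γ t A → HasType tyof Γ u A' →
      HasType tyof Γ (.pair t u) (.prod A A')
  | proj1 : HasType tyof Γ p (.prod A A') → HasType tyof Γ (.proj1 p) A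
  | proj2 : HasType tyof Γ p (.prod A A') → HasType tyof Γ (.proj2 p) A'
  | lam : HasType tyof (A :: Γ) t A' → HasType tyof Γ (.lam t) (.arr A A')
  | app : HasType tyof Γ t (.arr A A') → HasType tyof Γ u A →
      HasType tyof Γ (.app t u) A'
  | raise : HasType tyof Γ t .empty → HasType tyof Γ (.raise t) A
  | inl : HasType tyof Γ a A → HasType tyof Γ (.inl a) (.sum A A')
  | inr : HasType tyof Γ b A' → HasType tyof Γ (.inr b) (.sum A A')
  | case : HasType tyof Γ s (.sum A A') → HasType tyof (A :: Γ) bl T →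
      HasType tyof (A' :: Γ) br T → HasType tyof Γ (.case s bl br) T

mutual
  /-- Bidirectional checking judgment `Γ ⊢ t ⇐ A` (normal forms). -/
  inductive Check (tyof : C → Ty B) : List (Ty B) → Tm C → Ty B → Prop
    | star : Check tyof Γ .star .unit
    | pair : Check tyof Γ t A → Check tyof Γ u A' →
        Check tyof Γ (.pair t u) (.prod A A')
    | lam : Check tyof (A :: Γ) t A' → Check tyof Γ (.lam t) (.arr A A')
    | inl : Check tyof Γ a A → Check tyof Γ (.inl a) (.sum A A')
    | inr : Check tyof Γ b A' → Check tyof Γ (.inr b) (.sum A A')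
    | demote : Infer tyof Γ t A → A = A' → Check tyof Γ t A'
    | raise : Infer tyof Γ t .empty → Check tyof Γ (.raise t) A
    | case : Infer tyof Γ s (.sum A A') → Check tyof (A :: Γ) bl T →
        Check tyof (A' :: Γ) br T → Check tyof Γ (.case s bl br) T

  /-- Bidirectional inference judgment `Γ ⊢ t ⇒ A` (neutral forms). -/
  inductive Infer (tyof : C → Ty B) : List (Ty B) → Tm C → Ty B → Prop
    | cst (Γ) (c : C) : Infer tyof Γ (.cst c) (tyof c)
    | var : Γ[n]? = some A → Infer tyof Γ (.var n) A
    | proj1 : Infer tyof Γ p (.prod A A') → Infer tyof Γ (.proj1 p) A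
    | proj2 : Infer tyof Γ p (.prod A A') → Infer tyof Γ (.proj2 p) A'
    | app : Infer tyof Γ t (.arr A A') → Check tyof Γ u A →
        Infer tyof Γ (.app t u) A'
end

/-- The substitution replacing the last variable by `inl` of itself
(used in the η-law for sums). -/
def inlSub : Nat → Tm C
  | 0 => .inl (.var 0)
  | n + 1 => .var (n + 1)

/-- The substitution replacing the last variable by `inr` of itself. -/
def inrSub : Nat → Tm C
  | 0 => .inr (.var 0)
  | n + 1 => .var (n + 1)

/-- Conversion `Γ ⊢ t ≡ u : A`: the least congruent equivalence relation on
well-typed terms containing the β and η laws for all type formers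
(the equational theory of bicartesian closed categories). -/
inductive Conv (tyof : C → Ty B) : List (Ty B) → Tm C → Tm C → Ty B → Prop
  | refl : HasType tyof Γ t A → Conv tyof Γ t t A
  | symm : Conv tyof Γ t u A → Conv tyof Γ u t A
  | trans : Conv tyof Γ t u A → Conv tyof Γ u v A → Conv tyof Γ t v A
  -- congruence
  | pair : Conv tyof Γ t t' A → Conv tyof Γ u u' A' →
      Conv tyof Γ (.pair t u) (.pair t' u') (.prod A A')
  | proj1 : Conv tyof Γ p p' (.prod A A') → Conv tyof Γ (.proj1 p) (.proj1 p') A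
  | proj2 : Conv tyof Γ p p' (.prod A A') → Conv tyof Γ (.proj2 p) (.proj2 p') A'
  | lam : Conv tyof (A :: Γ) t t' A' → Conv tyof Γ (.lam t) (.lam t') (.arr A A')
  | app : Conv tyof Γ t t' (.arr A A') → Conv tyof Γ u u' A →
      Conv tyof Γ (.app t u) (.app t' u') A'
  | inl : Conv tyof Γ a a' A → Conv tyof Γ (.inl a) (.inl a') (.sum A A')
  | inr : Conv tyof Γ b b' A' → Conv tyof Γ (.inr b) (.inr b') (.sum A A')
  | raise : Conv tyof Γ t t' .empty → Conv tyof Γ (.raise t) (.raise t') A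
  | case : Conv tyof Γ s s' (.sum A A') → Conv tyof (A :: Γ) bl bl' T →
      Conv tyof (A' :: Γ) br br' T →
      Conv tyof Γ (.case s bl br) (.case s' bl' br') T
  -- β laws
  | beta_proj1 : HasType tyof Γ t A → HasType tyof Γ u A' →
      Conv tyof Γ (.proj1 (.pair t u)) t A
  | beta_proj2 : HasType tyof Γ t A → HasType tyof Γ u A' →
      Conv tyof Γ (.proj2 (.pair t u)) u A'
  | beta_app : HasType tyof (A :: Γ) t A' → HasType tyof Γ u A →
      Conv tyof Γ (.app (.lam t) u) (subst (sub0 u) t) A'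
  | beta_inl : HasType tyof Γ a A → HasType tyof (A :: Γ) bl T →
      HasType tyof (A' :: Γ) br T →
      Conv tyof Γ (.case (.inl a) bl br) (subst (sub0 a) bl) T
  | beta_inr : HasType tyof Γ b A' → HasType tyof (A :: Γ) bl T →
      HasType tyof (A' :: Γ) br T →
      Conv tyof Γ (.case (.inr b) bl br) (subst (sub0 b) br) T
  -- η laws
  | eta_unit : HasType tyof Γ t .unit → Conv tyof Γ t .star .unit
  | eta_prod : HasType tyof Γ t (.prod A A') →
      Conv tyof Γ t (.pair (.proj1 t) (.proj2 t)) (.prod A A')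
  | eta_arr : HasType tyof Γ t (.arr A A') →
      Conv tyof Γ t (.lam (.app (rename Nat.succ t) (.var 0))) (.arr A A')
  | eta_empty : HasType tyof Γ s .empty → HasType tyof Γ u T →
      Conv tyof Γ u (.raise s) T
  | eta_sum : HasType tyof Γ s (.sum A A') → HasType tyof (.sum A A' :: Γ) u T →
      Conv tyof Γ (subst (sub0 s) u)
        (.case s (subst inlSub u) (subst inrSub u)) T

/-- `t` is covered by the predicate `F`: `t` is a case tree whose nodes are
eliminations of neutrals at positive types and whose leaves satisfy `F`
(in suitably extended contexts). -/
inductive Covered (tyof : C → Ty B) (F : List (Ty B) → Tm C → Prop) :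
    List (Ty B) → Tm C → Prop
  | leaf : F Γ t → Covered tyof F Γ t
  | raise : Infer tyof Γ n .empty → Covered tyof F Γ (.raise n)
  | case : Infer tyof Γ n (.sum A A') → Covered tyof F (A :: Γ) bl →
      Covered tyof F (A' :: Γ) br → Covered tyof F Γ (.case n bl br)

/-- `ρ` is a (typed) renaming from `Δ` to `Γ`. -/
def IsRen (ρ : Nat → Nat) (Δ Γ : List (Ty B)) : Prop :=
  ∀ n A, Γ[n]? = some A → Δ[ρ n]? = some A

/-- Values at a type, defined by induction on the type (logical relation). -/
def Value (tyof : C → Ty B) : Ty B → List (Ty B) → Tm C → Prop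
  | .base b => Covered tyof (fun Δ u => Infer tyof Δ u (.base b))
  | .empty => Covered tyof (fun Δ u => Infer tyof Δ u .empty)
  | .sum A A' => Covered tyof (fun Δ u =>
      Infer tyof Δ u (.sum A A') ∨
      (∃ a, u = .inl a ∧ Value tyof A Δ a) ∨
      (∃ b, u = .inr b ∧ Value tyof A' Δ b))
  | .unit => fun Γ t => Check tyof Γ t .unit
  | .prod A A' => fun Γ t => Check tyof Γ t (.prod A A') ∧
      (∃ v, Reds (.proj1 t) v ∧ Value tyof A Γ v) ∧
      (∃ v, Reds (.proj2 t) v ∧ Value tyof A' Γ v)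
  | .arr A A' => fun Γ t => Check tyof Γ t (.arr A A') ∧
      ∀ Δ ρ, IsRen ρ Δ Γ → ∀ u, Value tyof A Δ u →
        ∃ v, Reds (.app (rename ρ t) u) v ∧ Value tyof A' Δ v

/-- `t` is reducible at `T` in `Γ`: it reduces to a value at `T`. -/
def Reducible (tyof : C → Ty B) (T : Ty B) (Γ : List (Ty B)) (t : Tm C) : Prop :=
  ∃ v, Reds t v ∧ Value tyof T Γ v

/-- Polarised vocabulary of a type: `voc true A = A⁺`, `voc false A = A⁻`. -/
def voc (p : Bool) : Ty B → Set B
  | .base b => if p then {b} else ∅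
  | .unit => ∅
  | .empty => ∅
  | .prod A A' => voc p A ∪ voc p A'
  | .sum A A' => voc p A ∪ voc p A'
  | .arr A A' => voc (!p) A ∪ voc p A'

/-- Polarised vocabulary of a context. -/
def vocCtx (p : Bool) (Γ : List (Ty B)) : Set B :=
  {b | ∃ A ∈ Γ, b ∈ voc p A}

/-- Context partitions `Γ = Γs ⋈ Γt`. -/
inductive Splits {B : Type} : List (Ty B) → List (Ty B) → List (Ty B) → Type
  | nil : Splits [] [] []
  | left (A : Ty B) : Splits Γ Γs Γt → Splits (A :: Γ) (A :: Γs) Γt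
  | right (A : Ty B) : Splits Γ Γs Γt → Splits (A :: Γ) Γs (A :: Γt)

/-- The renaming embedding `Γs` into `Γ` induced by a partition. -/
def Splits.renS {B : Type} : {Γ Γs Γt : List (Ty B)} → Splits Γ Γs Γt → Nat → Nat
  | _, _, _, .nil => id
  | _, _, _, .left _ s => fun n => match n with | 0 => 0 | m + 1 => s.renS m + 1
  | _, _, _, .right _ s => fun n => s.renS n + 1

/-- The renaming embedding `Γt` into `Γ` induced by a partition. -/
def Splits.renT {B : Type} : {Γ Γs Γt : List (Ty B)} → Splits Γ Γs Γt → Nat → Nat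
  | _, _, _, .nil => id
  | _, _, _, .left _ s => fun n => s.renT n + 1
  | _, _, _, .right _ s => fun n => match n with | 0 => 0 | m + 1 => s.renT m + 1

/-- The composite `r[l..]` where `l` lives in one part of the context
(embedded via `ρl`) and the tail variables of `r` live in the other part
(embedded via `ρr`); the result lives in the full context. -/
def splice (ρl ρr : Nat → Nat) (l r : Tm C) : Tm C :=
  subst (fun n => match n with
    | 0 => rename ρl l
    | m + 1 => .var (ρr m)) r

/-- The (empty) constant-typing function for a language without constants. -/
def noCst {B : Type} : Empty → Ty B := fun c => c.elim

/-- The set of constants occurring in a term. -/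
def constsOf : Tm C → Set C
  | .cst c => {c}
  | .var _ => ∅
  | .star => ∅
  | .pair t u => constsOf t ∪ constsOf u
  | .proj1 t => constsOf t
  | .proj2 t => constsOf t
  | .lam t => constsOf t
  | .app t u => constsOf t ∪ constsOf u
  | .inl t => constsOf t
  | .inr t => constsOf t
  | .raise t => constsOf t
  | .case s bl br => constsOf s ∪ constsOf bl ∪ constsOf br

/-! ### Auxiliary lemmas for subject reduction -/

section Aux

variable {tyof : C → Ty B}

theorem liftSub_comp_liftRen (σ : Nat → Tm C) (ρ : Nat → Nat) :
    (fun n => liftSub σ (liftRen ρ n)) = liftSub (fun n => σ (ρ n)) := by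
  funext n; cases n <;> rfl

theorem subst_rename (σ : Nat → Tm C) (ρ : Nat → Nat) (t : Tm C) :
    subst σ (rename ρ t) = subst (fun n => σ (ρ n)) t := by
  induction t generalizing σ ρ <;>
    simp [rename, subst, liftSub_comp_liftRen, *]

theorem liftSub_var : liftSub (C := C) (fun n => .var n) = fun n => .var n := by
  funext n; cases n <;> rfl

theorem subst_var_id (t : Tm C) : subst (fun n => .var n) t = t := by
  induction t <;> simp [subst, liftSub_var, *]

theorem liftSub_var_ren (ρ : Nat → Nat) :
    liftSub (C := C) (fun n => .var (ρ n)) = fun n => .var (liftRen ρ n) := by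
  funext n; cases n <;> rfl

theorem subst_var_ren (ρ : Nat → Nat) (t : Tm C) :
    subst (fun n => .var (ρ n)) t = rename ρ t := by
  induction t generalizing ρ <;> simp [subst, rename, liftSub_var_ren, *]

theorem subst_rename_id {σ : Nat → Tm C} {ρ : Nat → Nat}
    (h : ∀ n, σ (ρ n) = .var n) (t : Tm C) : subst σ (rename ρ t) = t := by
  rw [subst_rename]
  have : (fun n => σ (ρ n)) = fun n => Tm.var (C := C) n := funext h
  rw [this, subst_var_id]

theorem subst_rename_ren {σ : Nat → Tm C} {ρ ρ' : Nat → Nat}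
    (h : ∀ n, σ (ρ n) = .var (ρ' n)) (t : Tm C) :
    subst σ (rename ρ t) = rename ρ' t := by
  rw [subst_rename]
  have : (fun n => σ (ρ n)) = fun n => Tm.var (C := C) (ρ' n) := funext h
  rw [this, subst_var_ren]

-- L1
theorem subst_sub0_rename_succ (u t : Tm C) :
    subst (sub0 u) (rename Nat.succ t) = t :=
  subst_rename_id (σ := sub0 u) (ρ := Nat.succ) (fun n => rfl) t

-- L2
theorem subst_liftSub_sub0 (s t : Tm C) :
    subst (liftSub (sub0 s)) (rename (liftRen Nat.succ) t) = t :=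
  subst_rename_id (fun n => by cases n <;> rfl) t

-- L3
theorem subst_liftSub_inl (t : Tm C) :
    subst (liftSub inlSub) (rename (liftRen Nat.succ) t) = rename (liftRen Nat.succ) t :=
  subst_rename_ren (fun n => by cases n <;> rfl) t

theorem subst_liftSub_inr (t : Tm C) :
    subst (liftSub inrSub) (rename (liftRen Nat.succ) t) = rename (liftRen Nat.succ) t :=
  subst_rename_ren (fun n => by cases n <;> rfl) t

-- L4
theorem subst_inl_rename_succ (t : Tm C) :
    subst inlSub (rename Nat.succ t) = rename Nat.succ t :=
  subst_rename_ren (σ := inlSub) (ρ := Nat.succ) (ρ' := Nat.succ) (fun n => rfl) t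

theorem subst_inr_rename_succ (t : Tm C) :
    subst inrSub (rename Nat.succ t) = rename Nat.succ t :=
  subst_rename_ren (σ := inrSub) (ρ := Nat.succ) (ρ' := Nat.succ) (fun n => rfl) t

-- L5
theorem subst_sub0_var0 (t : Tm C) :
    subst (sub0 (.var 0)) (rename (liftRen Nat.succ) t) = t :=
  subst_rename_id (fun n => by cases n <;> rfl) t

/-! #### Typing under renamings and substitutions -/

theorem isRen_lift {ρ : Nat → Nat} {Δ Γ : List (Ty B)} (A : Ty B)
    (h : IsRen ρ Δ Γ) : IsRen (liftRen ρ) (A :: Δ) (A :: Γ) := by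
  intro n A' hn
  cases n with
  | zero => simpa [liftRen] using hn
  | succ m => simpa [liftRen] using h m A' (by simpa using hn)

theorem isRen_succ {Γ : List (Ty B)} (A : Ty B) : IsRen Nat.succ (A :: Γ) Γ :=
  fun n A' hn => by simpa using hn

theorem hasType_rename {Γ Δ : List (Ty B)} {ρ : Nat → Nat} {t : Tm C} {A : Ty B}
    (hρ : IsRen ρ Δ Γ) (ht : HasType tyof Γ t A) :
    HasType tyof Δ (rename ρ t) A := by
  induction ht generalizing Δ ρ with
  | cst _ c => exact .cst _ c
  | var h => exact .var (by exact hρ _ _ h)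
  | star => exact .star
  | pair h1 h2 ih1 ih2 => exact .pair (ih1 hρ) (ih2 hρ)
  | proj1 h ih => exact .proj1 (ih hρ)
  | proj2 h ih => exact .proj2 (ih hρ)
  | lam h ih => exact .lam (ih (isRen_lift _ hρ))
  | app h1 h2 ih1 ih2 => exact .app (ih1 hρ) (ih2 hρ)
  | raise h ih => exact .raise (ih hρ)
  | inl h ih => exact .inl (ih hρ)
  | inr h ih => exact .inr (ih hρ)
  | case hs hl hr ihs ihl ihr =>
      exact .case (ihs hρ) (ihl (isRen_lift _ hρ)) (ihr (isRen_lift _ hρ))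

/-- `σ` is a typed substitution from `Δ` to `Γ`. -/
def IsSub (tyof : C → Ty B) (σ : Nat → Tm C) (Δ Γ : List (Ty B)) : Prop :=
  ∀ n A, Γ[n]? = some A → HasType tyof Δ (σ n) A

theorem isSub_lift {σ : Nat → Tm C} {Δ Γ : List (Ty B)} (A : Ty B)
    (h : IsSub tyof σ Δ Γ) : IsSub tyof (liftSub σ) (A :: Δ) (A :: Γ) := by
  intro n A' hn
  cases n with
  | zero => exact .var (by simpa using hn)
  | succ m =>
      exact hasType_rename (isRen_succ A) (h m A' (by simpa using hn))

theorem hasType_subst {Γ Δ : List (Ty B)} {σ : Nat → Tm C} {t : Tm C} {A : Ty B}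
    (hσ : IsSub tyof σ Δ Γ) (ht : HasType tyof Γ t A) :
    HasType tyof Δ (subst σ t) A := by
  induction ht generalizing Δ σ with
  | cst _ c => exact .cst _ c
  | var h => exact hσ _ _ h
  | star => exact .star
  | pair h1 h2 ih1 ih2 => exact .pair (ih1 hσ) (ih2 hσ)
  | proj1 h ih => exact .proj1 (ih hσ)
  | proj2 h ih => exact .proj2 (ih hσ)
  | lam h ih => exact .lam (ih (isSub_lift _ hσ))
  | app h1 h2 ih1 ih2 => exact .app (ih1 hσ) (ih2 hσ)
  | raise h ih => exact .raise (ih hσ)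
  | inl h ih => exact .inl (ih hσ)
  | inr h ih => exact .inr (ih hσ)
  | case hs hl hr ihs ihl ihr =>
      exact .case (ihs hσ) (ihl (isSub_lift _ hσ)) (ihr (isSub_lift _ hσ))

theorem isSub_sub0 {Γ : List (Ty B)} {u : Tm C} {A : Ty B}
    (hu : HasType tyof Γ u A) : IsSub tyof (sub0 u) Γ (A :: Γ) := by
  intro n A' hn
  cases n with
  | zero => simpa using (by simpa using hn : A = A') ▸ hu
  | succ m => exact .var (by simpa using hn)

/-! #### Typed eliminations -/

/-- Typing of an elimination: it takes terms of type `Tc` to terms of type `T`. -/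
inductive ElimTy (tyof : C → Ty B) : Elim C → List (Ty B) → Ty B → Ty B → Prop
  | eapp : HasType tyof Γ u Au → ElimTy tyof (.eapp u) Γ (.arr Au T) T
  | eproj1 : ElimTy tyof .eproj1 Γ (.prod T T₂) T
  | eproj2 : ElimTy tyof .eproj2 Γ (.prod T₁ T) T
  | ecase : HasType tyof (S₁ :: Γ) cl T → HasType tyof (S₂ :: Γ) cr T →
      ElimTy tyof (.ecase cl cr) Γ (.sum S₁ S₂) T

theorem elim_inv {e : Elim C} {Γ : List (Ty B)} {x : Tm C} {T : Ty B}
    (ht : HasType tyof Γ (plug e x) T) :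
    ∃ Tc, ElimTy tyof e Γ Tc T ∧ HasType tyof Γ x Tc := by
  cases e with
  | eapp u => cases ht with
      | app h1 h2 => exact ⟨_, .eapp h2, h1⟩
  | eproj1 => cases ht with
      | proj1 h => exact ⟨_, .eproj1, h⟩
  | eproj2 => cases ht with
      | proj2 h => exact ⟨_, .eproj2, h⟩
  | ecase cl cr => cases ht with
      | case hs hl hr => exact ⟨_, .ecase hl hr, hs⟩

theorem plug_hasType {e : Elim C} {Γ : List (Ty B)} {x : Tm C} {Tc T : Ty B}
    (he : ElimTy tyof e Γ Tc T) (hx : HasType tyof Γ x Tc) :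
    HasType tyof Γ (plug e x) T := by
  cases he with
  | eapp hu => exact .app hx hu
  | eproj1 => exact .proj1 hx
  | eproj2 => exact .proj2 hx
  | ecase hl hr => exact .case hx hl hr

theorem weakenElim_ty {e : Elim C} {Γ : List (Ty B)} {Tc T : Ty B} (X : Ty B)
    (he : ElimTy tyof e Γ Tc T) :
    ElimTy tyof (weakenElim e) (X :: Γ) Tc T := by
  cases he with
  | eapp hu => exact .eapp (hasType_rename (isRen_succ X) hu)
  | eproj1 => exact .eproj1
  | eproj2 => exact .eproj2
  | ecase hl hr =>
      exact .ecase (hasType_rename (isRen_lift _ (isRen_succ X)) hl)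
        (hasType_rename (isRen_lift _ (isRen_succ X)) hr)

theorem plug_conv {e : Elim C} {Γ : List (Ty B)} {x y : Tm C} {Tc T : Ty B}
    (he : ElimTy tyof e Γ Tc T) (h : Conv tyof Γ x y Tc) :
    Conv tyof Γ (plug e x) (plug e y) T := by
  cases he with
  | eapp hu => exact .app h (.refl hu)
  | eproj1 => exact .proj1 h
  | eproj2 => exact .proj2 h
  | ecase hl hr => exact .case h (.refl hl) (.refl hr)

theorem subst_sub0_plug_weaken (s : Tm C) (e : Elim C) (X : Tm C) :
    subst (sub0 s) (plug (weakenElim e) X) = plug e (subst (sub0 s) X) := by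
  cases e <;>
    simp [plug, weakenElim, subst, subst_sub0_rename_succ, subst_liftSub_sub0]

theorem subst_inl_plug_weaken (e : Elim C) (X : Tm C) :
    subst inlSub (plug (weakenElim e) X) = plug (weakenElim e) (subst inlSub X) := by
  cases e <;>
    simp [plug, weakenElim, subst, subst_inl_rename_succ, subst_liftSub_inl]

theorem subst_inr_plug_weaken (e : Elim C) (X : Tm C) :
    subst inrSub (plug (weakenElim e) X) = plug (weakenElim e) (subst inrSub X) := by
  cases e <;>
    simp [plug, weakenElim, subst, subst_inr_rename_succ, subst_liftSub_inr]

/-! #### Subject reduction for typing (one step) -/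

theorem hasType_step {Γ : List (Ty B)} {t u : Tm C} {A : Ty B}
    (h : Step t u) (ht : HasType tyof Γ t A) : HasType tyof Γ u A := by
  induction h generalizing Γ A with
  | base r =>
      rcases r with r | r
      · cases r with
        | proj1 t u => cases ht with
            | proj1 h => cases h with | pair h1 h2 => exact h1
        | proj2 t u => cases ht with
            | proj2 h => cases h with | pair h1 h2 => exact h2
        | app t u => cases ht with
            | app h1 h2 => cases h1 with
                | lam hb => exact hasType_subst (isSub_sub0 h2) hb
        | case_inl a bl br => cases ht with
            | case hs hl hr => cases hs with
                | inl ha => exact hasType_subst (isSub_sub0 ha) hl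
        | case_inr b bl br => cases ht with
            | case hs hl hr => cases hs with
                | inr hb => exact hasType_subst (isSub_sub0 hb) hr
      · cases r with
        | raise e t =>
            obtain ⟨Tc, he, hx⟩ := elim_inv ht
            cases hx with | raise h => exact .raise h
        | case e s bl br =>
            obtain ⟨Tc, he, hx⟩ := elim_inv ht
            cases hx with
            | case hs hl hr =>
                exact .case hs (plug_hasType (weakenElim_ty _ he) hl)
                  (plug_hasType (weakenElim_ty _ he) hr)
  | pairL h ih => cases ht with | pair h1 h2 => exact .pair (ih h1) h2
  | pairR h ih => cases ht with | pair h1 h2 => exact .pair h1 (ih h2)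
  | proj1 h ih => cases ht with | proj1 h1 => exact .proj1 (ih h1)
  | proj2 h ih => cases ht with | proj2 h1 => exact .proj2 (ih h1)
  | lam h ih => cases ht with | lam h1 => exact .lam (ih h1)
  | appL h ih => cases ht with | app h1 h2 => exact .app (ih h1) h2
  | appR h ih => cases ht with | app h1 h2 => exact .app h1 (ih h2)
  | inl h ih => cases ht with | inl h1 => exact .inl (ih h1)
  | inr h ih => cases ht with | inr h1 => exact .inr (ih h1)
  | raise h ih => cases ht with | raise h1 => exact .raise (ih h1)
  | caseS h ih => cases ht with
      | case hs hl hr => exact .case (ih hs) hl hr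
  | caseL h ih => cases ht with
      | case hs hl hr => exact .case hs (ih hl) hr
  | caseR h ih => cases ht with
      | case hs hl hr => exact .case hs hl (ih hr)

theorem hasType_reds {Γ : List (Ty B)} {t u : Tm C} {A : Ty B}
    (hr : Reds t u) (ht : HasType tyof Γ t A) : HasType tyof Γ u A := by
  induction hr with
  | refl => exact ht
  | tail _ hstep ih => exact hasType_step hstep ih

/-! #### The commuting conversion for `case`, derived from `η` for sums -/

theorem conv_cc_case {Γ : List (Ty B)} {T : Ty B} (e : Elim C) (s bl br : Tm C)
    (ht : HasType tyof Γ (plug e (.case s bl br)) T) :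
    Conv tyof Γ (plug e (.case s bl br))
      (.case s (plug (weakenElim e) bl) (plug (weakenElim e) br)) T := by
  obtain ⟨Tc, he, hx⟩ := elim_inv ht
  cases hx with
  | @case _ _ A₁ A₂ _ _ _ hs hl hr =>
    set bl' := rename (liftRen Nat.succ) bl with hbl'
    set br' := rename (liftRen Nat.succ) br with hbr'
    set X : Tm C := .case (.var 0) bl' br' with hX
    -- typing of `X` in the extended context
    have hXty : HasType tyof (Ty.sum A₁ A₂ :: Γ) X Tc :=
      .case (.var (by simp)) (hasType_rename (isRen_lift _ (isRen_succ _)) hl)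
        (hasType_rename (isRen_lift _ (isRen_succ _)) hr)
    have hu₀ : HasType tyof (Ty.sum A₁ A₂ :: Γ) (plug (weakenElim e) X) T :=
      plug_hasType (weakenElim_ty _ he) hXty
    have heta := Conv.eta_sum hs hu₀
    have eq1 : subst (sub0 s) (plug (weakenElim e) X) = plug e (.case s bl br) := by
      rw [subst_sub0_plug_weaken]
      simp [hX, subst, sub0, hbl', hbr', subst_liftSub_sub0]
    have eq2 : subst inlSub (plug (weakenElim e) X)
        = plug (weakenElim e) (.case (.inl (.var 0)) bl' br') := by
      rw [subst_inl_plug_weaken]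
      simp [hX, subst, inlSub, hbl', hbr', subst_liftSub_inl]
    have eq3 : subst inrSub (plug (weakenElim e) X)
        = plug (weakenElim e) (.case (.inr (.var 0)) bl' br') := by
      rw [subst_inr_plug_weaken]
      simp [hX, subst, inrSub, hbl', hbr', subst_liftSub_inr]
    rw [eq1, eq2, eq3] at heta
    refine heta.trans (Conv.case (.refl hs) ?_ ?_)
    · refine plug_conv (weakenElim_ty _ he) ?_
      have hb := Conv.beta_inl (tyof := tyof)
        (a := Tm.var 0) (bl := bl') (br := br') (Γ := A₁ :: Γ)
        (.var (by simp))
        (hasType_rename (isRen_lift _ (isRen_succ _)) hl)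
        (hasType_rename (isRen_lift _ (isRen_succ _)) hr)
      rwa [hbl', subst_sub0_var0] at hb
    · refine plug_conv (weakenElim_ty _ he) ?_
      have hb := Conv.beta_inr (tyof := tyof)
        (b := Tm.var 0) (bl := bl') (br := br') (Γ := A₂ :: Γ)
        (.var (by simp))
        (hasType_rename (isRen_lift _ (isRen_succ _)) hl)
        (hasType_rename (isRen_lift _ (isRen_succ _)) hr)
      rwa [hbr', subst_sub0_var0] at hb

/-! #### Conversion for one step -/

theorem conv_step {Γ : List (Ty B)} {t u : Tm C} {A : Ty B}
    (h : Step t u) (ht : HasType tyof Γ t A) : Conv tyof Γ t u A := by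
  induction h generalizing Γ A with
  | base r =>
      rcases r with r | r
      · cases r with
        | proj1 t u => cases ht with
            | proj1 h => cases h with
                | pair h1 h2 => exact .beta_proj1 h1 h2
        | proj2 t u => cases ht with
            | proj2 h => cases h with
                | pair h1 h2 => exact .beta_proj2 h1 h2
        | app t u => cases ht with
            | app h1 h2 => cases h1 with
                | lam hb => exact .beta_app hb h2
        | case_inl a bl br => cases ht with
            | case hs hl hr => cases hs with
                | inl ha => exact .beta_inl ha hl hr
        | case_inr b bl br => cases ht with
            | case hs hl hr => cases hs with
                | inr hb => exact .beta_inr hb hl hr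
      · cases r with
        | raise e t =>
            obtain ⟨Tc, he, hx⟩ := elim_inv ht
            cases hx with | raise h => exact .eta_empty h ht
        | case e s bl br => exact conv_cc_case e s bl br ht
  | pairL h ih => cases ht with
      | pair h1 h2 => exact .pair (ih h1) (.refl h2)
  | pairR h ih => cases ht with
      | pair h1 h2 => exact .pair (.refl h1) (ih h2)
  | proj1 h ih => cases ht with | proj1 h1 => exact .proj1 (ih h1)
  | proj2 h ih => cases ht with | proj2 h1 => exact .proj2 (ih h1)
  | lam h ih => cases ht with | lam h1 => exact .lam (ih h1)
  | appL h ih => cases ht with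
      | app h1 h2 => exact .app (ih h1) (.refl h2)
  | appR h ih => cases ht with
      | app h1 h2 => exact .app (.refl h1) (ih h2)
  | inl h ih => cases ht with | inl h1 => exact .inl (ih h1)
  | inr h ih => cases ht with | inr h1 => exact .inr (ih h1)
  | raise h ih => cases ht with | raise h1 => exact .raise (ih h1)
  | caseS h ih => cases ht with
      | case hs hl hr => exact .case (ih hs) (.refl hl) (.refl hr)
  | caseL h ih => cases ht with
      | case hs hl hr => exact .case (.refl hs) (ih hl) (.refl hr)
  | caseR h ih => cases ht with
      | case hs hl hr => exact .case (.refl hs) (.refl hl) (ih hr)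

end Aux

/-- **Subject reduction up to conversion.** If `Γ ⊢ t : A` and `t ⇝* u`, then
`Γ ⊢ t ≡ u : A`. -/
theorem subject_reduction {B C : Type} (tyof : C → Ty B)
    (Γ : List (Ty B)) (t u : Tm C) (A : Ty B)
    (ht : HasType tyof Γ t A) (hr : Reds t u) :
    Conv tyof Γ t u A := by
  induction hr with
  | refl => exact Conv.refl ht
  | tail hsteps hstep ih =>
      exact ih.trans (conv_step hstep (hasType_reds hsteps ht))

end STLCp
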